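/- arXiv:2507.15438 — 4 statements merged into one kernel-verified Lean document; each statement's English description precedes it below -/
import Mathlib

section
/- Let γ₁ > 0 > γ₂ and g(x) = (γ₁·e^{γ₂x} - γ₂·e^{γ₁x})/(γ₁ - γ₂). Then for all x > 0, g'(x)/g(x) - g''(x)/g'(x) = (γ₂·e^{γ₁x}/g(x))·(γ₁·e^{γ₂x}/g'(x)), and this quantity is strictly negative. -/
/-!
Both `g` and its derivatives are combinations of `e^{γ₂x}` and `e^{γ₁x}`, and a direct computation
gives the Wronskian-type identity `g'² - g g'' = (γ₂ e^{γ₁x}) (γ₁ e^{γ₂x})`. Dividing by `g g'`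
yields the stated product. For `x > 0` we have `e^{γ₂x} < e^{γ₁x}`, so `g` and `g'` are positive,
while `γ₂ e^{γ₁x} < 0 < γ₁ e^{γ₂x}`; hence the product is negative.
-/

open Real

noncomputable def expCombination (p q α β : ℝ) (x : ℝ) : ℝ :=
  p * exp (α * x) + q * exp (β * x)

theorem hasDerivAt_expCombination (p q α β x : ℝ) :
    HasDerivAt (expCombination p q α β) (expCombination (p * α) (q * β) α β x) x := by
  have hexp (c : ℝ) : HasDerivAt (fun y => exp (c * y)) (exp (c * x) * c) x :=
    by simpa using ((hasDerivAt_id' x).const_mul c).exp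
  refine (((hexp α).const_mul p).add ((hexp β).const_mul q)).congr_deriv ?_
  simp only [expCombination]
  ring

theorem deriv_expCombination (p q α β : ℝ) :
    deriv (expCombination p q α β) = expCombination (p * α) (q * β) α β :=
  funext fun x => (hasDerivAt_expCombination p q α β x).deriv

theorem expCombination_pos {p q : ℝ} (hp : 0 < p) (hq : 0 < q) (α β x : ℝ) :
    0 < expCombination p q α β x := by
  unfold expCombination
  positivity

theorem expCombination_neg_self_pos {q α β x : ℝ} (hq : 0 < q) (hαβ : α * x < β * x) :
    0 < expCombination (-q) q α β x := by
  have := exp_lt_exp.2 hαβ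
  unfold expCombination
  nlinarith

theorem expCombination_wronskian (p q α β x : ℝ) :
    expCombination (p * α) (q * β) α β x ^ 2
        - expCombination p q α β x * expCombination (p * α * α) (q * β * β) α β x
      = -(p * q * (α - β) ^ 2) * exp (α * x) * exp (β * x) := by
  simp only [expCombination]
  ring

theorem div_sub_div_eq_mul_of_sq_sub_mul_eq {K : Type*} [Field K] {f f' f'' u v : K}
    (hf : f ≠ 0) (hf' : f' ≠ 0) (h : f' ^ 2 - f * f'' = u * v) :
    f' / f - f'' / f' = (u / f) * (v / f') := by
  rw [div_sub_div _ _ hf hf', div_mul_div_comm, ← h]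
  ring

theorem stmt_4 (γ₁ γ₂ : ℝ) (h1 : 0 < γ₁) (h2 : γ₂ < 0) (g : ℝ → ℝ)
    (hg : ∀ x, g x = (γ₁ * Real.exp (γ₂ * x) - γ₂ * Real.exp (γ₁ * x)) / (γ₁ - γ₂)) :
    ∀ x : ℝ, 0 < x →
      deriv g x / g x - deriv (deriv g) x / deriv g x =
        (γ₂ * Real.exp (γ₁ * x) / g x) * (γ₁ * Real.exp (γ₂ * x) / deriv g x) ∧
      deriv g x / g x - deriv (deriv g) x / deriv g x < 0 := by
  intro x hx
  have hΔ : 0 < γ₁ - γ₂ := by linarith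
  have hg_eq : g = expCombination (γ₁ / (γ₁ - γ₂)) (-γ₂ / (γ₁ - γ₂)) γ₂ γ₁ := by
    ext y
    rw [hg, expCombination]
    ring
  set p := γ₁ / (γ₁ - γ₂)
  set q := -γ₂ / (γ₁ - γ₂)
  have hq : 0 < q := div_pos (neg_pos.2 h2) hΔ
  have hG := expCombination_pos (div_pos h1 hΔ) hq γ₂ γ₁ x
  have hG' : 0 < expCombination (p * γ₂) (q * γ₁) γ₂ γ₁ x := by
    have hpq : p * γ₂ = -(q * γ₁) := by simp only [p, q]; ring
    exact hpq ▸ expCombination_neg_self_pos (mul_pos hq h1) (by nlinarith)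
  have hW : expCombination (p * γ₂) (q * γ₁) γ₂ γ₁ x ^ 2
      - expCombination p q γ₂ γ₁ x * expCombination (p * γ₂ * γ₂) (q * γ₁ * γ₁) γ₂ γ₁ x
      = γ₂ * exp (γ₁ * x) * (γ₁ * exp (γ₂ * x)) := by
    rw [expCombination_wronskian]
    simp only [p, q]
    field_simp
    ring
  rw [hg_eq, deriv_expCombination, deriv_expCombination]
  have hid := div_sub_div_eq_mul_of_sq_sub_mul_eq hG.ne' hG'.ne' hW
  refine ⟨hid, hid ▸ mul_neg_of_neg_of_pos (div_neg_of_neg_of_pos ?_ hG) (div_pos ?_ hG')⟩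
  · exact mul_neg_of_neg_of_pos h2 (exp_pos _)
  · exact mul_pos h1 (exp_pos _)
end

section
/- Let (B_t) be a standard Brownian motion and B*_t = sup_{s ≤ t} B_s. For every t > 0 and all real a, b with a > max{b, 0}: P(B*_t ≥ a, B_t ≤ b) = P(B_t ≥ 2a - b). -/
/-! Sample `B` on the dyadic grid of mesh `t / 2 ^ m` and let `τ` be the first step at which the
sampled walk `W` reaches `a`. On `{τ = k}` the path up to step `k` is independent of the centred
Gaussian increment `W n - W k`, so flipping the sign of that increment preserves the law; for
`c ≥ a` this gives `P (W n ≥ c) = P (τ ≤ n, W n ≤ 2 W τ - c)`. With `c = 2a' - b` it bounds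
`P (max W ≥ a', W n ≤ b)` by `P (W n ≥ 2a' - b)`; for `a' < a` these events increase with `m` and
their union covers `{B*_t ≥ a, B_t ≤ b}`, and then `a' ↑ a`. Conversely, continuity makes the
overshoot `W τ - a` vanish as the mesh shrinks, so the limsup of the reflected events lies in
`{B*_t ≥ a, B_t ≤ b}`. -/

open MeasureTheory ProbabilityTheory

/-- A standard one-dimensional Brownian motion started at `0` under `P`. -/
structure IsStandardBM {Ω : Type*} [MeasurableSpace Ω] (P : Measure Ω)
    (B : ℝ → Ω → ℝ) : Prop where
  isProb : IsProbabilityMeasure P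
  meas : ∀ t, Measurable (B t)
  init : ∀ᵐ ω ∂P, B 0 ω = 0
  cont : ∀ᵐ ω ∂P, Continuous fun t => B t ω
  incr : ∀ s t : ℝ, 0 ≤ s → s ≤ t →
    P.map (fun ω => B t ω - B s ω) = gaussianReal 0 (Real.toNNReal (t - s))
  indep : ∀ (n : ℕ) (u : Fin (n + 1) → ℝ), Monotone u → 0 ≤ u 0 →
    iIndepFun
      (fun i : Fin n => fun ω => B (u i.succ) ω - B (u i.castSucc) ω) P

/-- Running maximum `sup_{0 ≤ s ≤ t} B s ω` of a process. -/
noncomputable def runMax {Ω : Type*} (B : ℝ → Ω → ℝ) (t : ℝ) (ω : Ω) : ℝ :=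
  sSup ((fun s => B s ω) '' Set.Icc 0 t)

section Reflection

open Finset Filter
open scoped ENNReal

section Measure

variable {α : Type*} [MeasurableSpace α] {μ : Measure α} [IsFiniteMeasure μ] {x : ℝ≥0∞}

theorem le_measure_limsup_atTop {s : ℕ → Set α} (hs : ∀ n, MeasurableSet (s n))
    (h : ∀ n, x ≤ μ (s n)) : x ≤ μ (limsup s atTop) := by
  rw [limsup_eq_iInf_iSup_of_nat]
  simp only [Set.iSup_eq_iUnion, Set.iInf_eq_iInter]
  have hanti : Antitone fun n => ⋃ i ≥ n, s i := fun n l hnl =>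
    Set.iUnion₂_mono' fun i hi => ⟨i, hnl.trans hi, le_rfl⟩
  rw [hanti.measure_iInter (fun n => (MeasurableSet.iUnion fun i =>
    MeasurableSet.iUnion fun _ => hs i).nullMeasurableSet) ⟨0, measure_ne_top _ _⟩]
  exact le_iInf fun n => (h n).trans <|
    measure_mono (Set.subset_iUnion₂ (s := fun i (_ : i ≥ n) => s i) n le_rfl)

theorem le_measure_setOf_le_of_forall_pos {f : α → ℝ} (hf : Measurable f) {c : ℝ}
    (h : ∀ ε > 0, x ≤ μ {ω | c - ε ≤ f ω}) : x ≤ μ {ω | c ≤ f ω} := by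
  have hinter : {ω | c ≤ f ω} = ⋂ n : ℕ, {ω | c - 1 / (n + 1) ≤ f ω} := by
    ext ω
    simp only [Set.mem_ofPred_eq, Set.mem_iInter]
    refine ⟨fun hω n => by linarith [Nat.one_div_pos_of_nat (α := ℝ) (n := n)], fun hω => ?_⟩
    simpa using
      le_of_tendsto' (tendsto_const_nhds.sub tendsto_one_div_add_atTop_nhds_zero_nat) hω
  rw [hinter, Antitone.measure_iInter (fun n l hnl ω hω => ?_)
    (fun n => (measurableSet_le measurable_const hf).nullMeasurableSet) ⟨0, measure_ne_top _ _⟩]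
  · exact le_iInf fun n => h _ Nat.one_div_pos_of_nat
  · exact (sub_le_sub_left (Nat.one_div_le_one_div hnl) c).trans hω

end Measure

variable {Ω : Type*}

theorem ProbabilityTheory.IndepFun.map_prodMk_neg_right [MeasurableSpace Ω] {P : Measure Ω}
    [IsFiniteMeasure P] {β : Type*} [MeasurableSpace β] {F : Ω → β} {Y : Ω → ℝ}
    (hFY : IndepFun F Y P) (hF : Measurable F) (hY : Measurable Y)
    (hsymm : (P.map Y).map (fun x => -x) = P.map Y) :
    P.map (fun ω => (F ω, -Y ω)) = P.map (fun ω => (F ω, Y ω)) :=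
  calc P.map (fun ω => (F ω, -Y ω)) = (P.map F).prod (P.map (-Y)) :=
        (indepFun_iff_map_prod_eq_prod_map_map hF.aemeasurable hY.neg.aemeasurable).mp
          hFY.neg_right
    _ = (P.map F).prod (P.map Y) := by rw [← hsymm, Measure.map_map measurable_neg hY]; rfl
    _ = P.map (fun ω => (F ω, Y ω)) :=
        ((indepFun_iff_map_prod_eq_prod_map_map hF.aemeasurable hY.aemeasurable).mp hFY).symm

def firstPassageAt (Z : ℕ → Ω → ℝ) (a : ℝ) (k : ℕ) : Set Ω :=
  {ω | a ≤ Z k ω ∧ ∀ j < k, Z j ω < a}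

section FirstPassage

variable {Z : ℕ → Ω → ℝ} {a : ℝ}

theorem pairwise_disjoint_firstPassageAt :
    Pairwise (Function.onFun Disjoint (firstPassageAt Z a)) := by
  intro k l hkl
  rcases lt_or_gt_of_ne hkl with h | h
  · exact Set.disjoint_left.mpr fun ω hk hl => (hl.2 k h).not_ge hk.1
  · exact Set.disjoint_left.mpr fun ω hk hl => (hk.2 l h).not_ge hl.1

theorem exists_firstPassageAt_le {ω : Ω} {j : ℕ} (h : a ≤ Z j ω) :
    ∃ k ≤ j, ω ∈ firstPassageAt Z a k := by
  classical
  have hex : ∃ k, a ≤ Z k ω := ⟨j, h⟩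
  exact ⟨Nat.find hex, Nat.find_min' hex h, Nat.find_spec hex,
    fun i hi => not_le.mp (Nat.find_min hex hi)⟩

theorem measurableSet_firstPassageAt [MeasurableSpace Ω] (hZ : ∀ j, Measurable (Z j))
    (k : ℕ) : MeasurableSet (firstPassageAt Z a k) := by
  unfold firstPassageAt
  measurability

end FirstPassage

section IndepIncrements

variable [MeasurableSpace Ω] {P : Measure Ω} {Z : ℕ → Ω → ℝ} {n : ℕ}

structure HasIndepSymmIncrements (Z : ℕ → Ω → ℝ) (n : ℕ) (P : Measure Ω) : Prop where
  measurable : ∀ j, Measurable (Z j)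
  zero : ∀ ω, Z 0 ω = 0
  iIndepFun_incr : iIndepFun (fun (i : Fin n) ω => Z (i + 1) ω - Z i ω) P
  map_neg_sub : ∀ k ≤ n,
    (P.map fun ω => Z n ω - Z k ω).map (fun x => -x) = P.map fun ω => Z n ω - Z k ω

/- The stopped path is a function of the increments before `k`, and `Z n - Z k` of those from
`k` on. -/
theorem indepFun_stopped_sub (hZ : ∀ j, Measurable (Z j)) (hZ₀ : ∀ ω, Z 0 ω = 0)
    (hind : iIndepFun (fun (i : Fin n) ω => Z (i + 1) ω - Z i ω) P) {k : ℕ} (hk : k ≤ n) :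
    IndepFun (fun ω j => Z (min j k) ω) (fun ω => Z n ω - Z k ω) P := by
  set X : Fin n → Ω → ℝ := fun i ω => Z (i + 1) ω - Z i ω
  set mX : Set (Fin n) → MeasurableSpace Ω :=
    fun S => ⨆ i ∈ S, MeasurableSpace.comap (X i) inferInstance
  have hsplit : Indep (mX {i | (i : ℕ) < k}) (mX {i | k ≤ (i : ℕ)}) P :=
    indep_iSup_of_disjoint (fun i => ((hZ _).sub (hZ _)).comap_le)
      ((iIndepFun_iff_iIndep _ _ _).mp hind)
      (Set.disjoint_left.mpr fun i (hi : (i : ℕ) < k) (hi' : k ≤ (i : ℕ)) => hi.not_ge hi')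
  have hsub : ∀ (S : Set (Fin n)) {l l' : ℕ}, l ≤ l' →
      (∀ i ∈ Ico l l', ∃ h : i < n, ⟨i, h⟩ ∈ S) →
      Measurable[mX S] (fun ω => Z l' ω - Z l ω) := by
    intro S l l' hll' hS
    rw [show (fun ω => Z l' ω - Z l ω) = fun ω => ∑ i ∈ Ico l l', (Z (i + 1) ω - Z i ω) from
      funext fun ω => (Finset.sum_Ico_sub (Z · ω) hll').symm]
    refine Finset.measurable_sum (m := mX S) _ fun i hi => ?_
    obtain ⟨hin, hiS⟩ := hS i hi
    exact Measurable.of_comap_le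
      (le_iSup₂ (f := fun i (_ : i ∈ S) => MeasurableSpace.comap (X i) _) ⟨i, hin⟩ hiS)
  rw [IndepFun_iff_Indep]
  refine indep_of_indep_of_le_right (indep_of_indep_of_le_left hsplit ?_) ?_
  · refine Measurable.comap_le (@measurable_pi_lambda _ _ _ (mX _) _ _ fun j => ?_)
    simpa [hZ₀] using hsub _ (Nat.zero_le _) fun i hi => by
      obtain ⟨-, hi⟩ := mem_Ico.mp hi
      exact ⟨by omega, show i < k by omega⟩
  · exact Measurable.comap_le <| hsub _ hk fun i hi => by
      obtain ⟨hi, hi'⟩ := mem_Ico.mp hi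
      exact ⟨by omega, show k ≤ i from hi⟩

namespace HasIndepSymmIncrements

theorem measure_firstPassageAt_inter_reflect (hZ : HasIndepSymmIncrements Z n P) {k : ℕ}
    (hk : k ≤ n) (a c : ℝ) :
    P (firstPassageAt Z a k ∩ {ω | Z n ω ≤ 2 * Z k ω - c}) =
      P (firstPassageAt Z a k ∩ {ω | c ≤ Z n ω}) := by
  have := hZ.iIndepFun_incr.isProbabilityMeasure
  have hV : Measurable fun ω j => Z (min j k) ω :=
    measurable_pi_lambda _ fun j => hZ.measurable _
  have hY : Measurable fun ω => Z n ω - Z k ω := (hZ.measurable n).sub (hZ.measurable k)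
  -- Both events are read off (stopped path, `Z n - Z k`) through `C`; the reflection negates
  -- the second coordinate.
  set C : Set ((ℕ → ℝ) × ℝ) := {q | (a ≤ q.1 k ∧ ∀ j < k, q.1 j < a) ∧ c ≤ q.1 k + q.2}
  have hC : MeasurableSet C := by measurability
  have key := congrArg (fun μ : Measure ((ℕ → ℝ) × ℝ) => μ C) <|
    (indepFun_stopped_sub hZ.measurable hZ.zero hZ.iIndepFun_incr hk).map_prodMk_neg_right
      hV hY (hZ.map_neg_sub k hk)
  rw [Measure.map_apply (hV.prodMk (g := fun ω => -(Z n ω - Z k ω)) hY.neg) hC,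
    Measure.map_apply (hV.prodMk hY) hC] at key
  have hpast : ∀ ω, (a ≤ Z k ω ∧ ∀ j < k, Z (min j k) ω < a) ↔ ω ∈ firstPassageAt Z a k :=
    fun ω => by simp +contextual [firstPassageAt, min_eq_left_of_lt]
  convert key using 2 <;> ext ω <;>
    simp only [C, Set.mem_preimage, Set.mem_ofPred_eq, hpast, Set.mem_inter_iff, min_self] <;>
    constructor <;> rintro ⟨h, h'⟩ <;> exact ⟨h, by linarith⟩

theorem measure_le_eq_measure_reflect (hZ : HasIndepSymmIncrements Z n P) {a c : ℝ}
    (hac : a ≤ c) :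
    P {ω | c ≤ Z n ω} =
      P (⋃ k ∈ range (n + 1), firstPassageAt Z a k ∩ {ω | Z n ω ≤ 2 * Z k ω - c}) := by
  have hcover : {ω | c ≤ Z n ω} =
      ⋃ k ∈ range (n + 1), firstPassageAt Z a k ∩ {ω | c ≤ Z n ω} := by
    ext ω
    simp only [Set.mem_ofPred_eq, Set.mem_iUnion, Set.mem_inter_iff, mem_range, exists_prop]
    refine ⟨fun h => ?_, fun ⟨_, _, _, h⟩ => h⟩
    obtain ⟨k, hk, hfp⟩ := exists_firstPassageAt_le (hac.trans h)
    exact ⟨k, Nat.lt_succ_of_le hk, hfp, h⟩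
  have hdisj : ∀ E : ℕ → Set Ω,
      (range (n + 1) : Set ℕ).PairwiseDisjoint fun k => firstPassageAt Z a k ∩ E k :=
    fun E k _ l _ hkl =>
      (pairwise_disjoint_firstPassageAt hkl).mono Set.inter_subset_left Set.inter_subset_left
  have hfp := measurableSet_firstPassageAt (a := a) hZ.measurable
  rw [hcover, measure_biUnion_finset (hdisj _) fun k _ =>
      (hfp k).inter (measurableSet_le measurable_const (hZ.measurable n)),
    measure_biUnion_finset (hdisj _) fun k _ =>
      (hfp k).inter <| measurableSet_le (hZ.measurable n)
        (((hZ.measurable k).const_mul 2).sub_const c)]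
  exact sum_congr rfl fun k hk =>
    (hZ.measure_firstPassageAt_inter_reflect (Nat.lt_succ_iff.mp (mem_range.mp hk)) a c).symm

theorem measure_exists_le_and_le_le (hZ : HasIndepSymmIncrements Z n P) {a b : ℝ}
    (hba : b ≤ a) :
    P {ω | (∃ j ≤ n, a ≤ Z j ω) ∧ Z n ω ≤ b} ≤ P {ω | 2 * a - b ≤ Z n ω} := by
  rw [hZ.measure_le_eq_measure_reflect (a := a) (by linarith)]
  refine measure_mono fun ω ⟨⟨j, hjn, hj⟩, hb⟩ => ?_
  obtain ⟨k, hkj, hfp⟩ := exists_firstPassageAt_le hj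
  exact Set.mem_biUnion (mem_range.mpr (by omega))
    ⟨hfp, show Z n ω ≤ 2 * Z k ω - (2 * a - b) by linarith [hfp.1]⟩

end HasIndepSymmIncrements

end IndepIncrements

noncomputable def dyadic (t : ℝ) (m j : ℕ) : ℝ := j * t / 2 ^ m

section Dyadic

variable {t : ℝ}

@[simp] theorem dyadic_zero (t : ℝ) (m : ℕ) : dyadic t m 0 = 0 := by simp [dyadic]

@[simp] theorem dyadic_two_pow (t : ℝ) (m : ℕ) : dyadic t m (2 ^ m) = t := by
  simp [dyadic]

theorem dyadic_two_mul (t : ℝ) (m j : ℕ) : dyadic t (m + 1) (2 * j) = dyadic t m j := by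
  simp only [dyadic, pow_succ]; push_cast; field_simp

theorem dyadic_succ_sub (t : ℝ) (m j : ℕ) :
    dyadic t m (j + 1) - dyadic t m j = t / 2 ^ m := by
  simp only [dyadic]; push_cast; ring

theorem monotone_dyadic (ht : 0 ≤ t) (m : ℕ) : Monotone (dyadic t m) := fun j l h => by
  unfold dyadic; gcongr

theorem dyadic_mem_Icc (ht : 0 ≤ t) {m j : ℕ} (hj : j ≤ 2 ^ m) : dyadic t m j ∈ Set.Icc 0 t :=
  ⟨(dyadic_zero t m).symm.trans_le (monotone_dyadic ht m (Nat.zero_le j)),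
    (monotone_dyadic ht m hj).trans_eq (dyadic_two_pow t m)⟩

theorem eventually_div_two_pow_lt (t : ℝ) {δ : ℝ} (hδ : 0 < δ) :
    ∀ᶠ m : ℕ in atTop, t / 2 ^ m < δ :=
  (tendsto_pow_atTop_atTop_of_one_lt one_lt_two).const_div_atTop t
    |>.eventually (gt_mem_nhds hδ)

theorem exists_dyadic_near (ht : 0 < t) {s : ℝ} (hs : s ∈ Set.Icc 0 t) (m : ℕ) :
    ∃ j ≤ 2 ^ m, dyadic t m j ≤ s ∧ s - dyadic t m j < t / 2 ^ m := by
  have h2m : (0 : ℝ) < 2 ^ m := by positivity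
  set x := s * 2 ^ m / t
  have hx : 0 ≤ x := by have := hs.1; positivity
  refine ⟨⌊x⌋₊, ?_, ?_, ?_⟩
  · exact Nat.floor_le_of_le (by rw [div_le_iff₀ ht]; push_cast; nlinarith [hs.2])
  · have := Nat.floor_le hx
    rw [le_div_iff₀ ht] at this
    rw [dyadic, div_le_iff₀ h2m]
    linarith
  · have := Nat.lt_floor_add_one x
    rw [div_lt_iff₀ ht] at this
    rw [dyadic, sub_lt_iff_lt_add, ← add_div, lt_div_iff₀ h2m]
    linarith

end Dyadic

section ContinuousPath

variable {f : ℝ → ℝ} {t : ℝ}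

theorem exists_dyadic_lt_of_lt_sSup (hf : Continuous f) (ht : 0 < t) {x : ℝ}
    (h : x < sSup (f '' Set.Icc 0 t)) : ∃ m, ∃ j ≤ 2 ^ m, x < f (dyadic t m j) := by
  obtain ⟨s, hs, hfs⟩ :=
    (isCompact_Icc.image hf).sSup_mem ((Set.nonempty_Icc.mpr ht.le).image f)
  obtain ⟨δ, hδ, hball⟩ := Metric.eventually_nhds_iff.mp <|
    hf.continuousAt.eventually (Ioi_mem_nhds (hfs.symm ▸ h : x < f s))
  obtain ⟨m, hm⟩ := (eventually_div_two_pow_lt t hδ).exists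
  obtain ⟨j, hj, hjs, hjs'⟩ := exists_dyadic_near ht hs m
  exact ⟨m, j, hj, hball (by rw [Real.dist_eq, abs_sub_lt_iff]; constructor <;> linarith)⟩

theorem eventually_firstPassage_overshoot_lt (hf : ContinuousOn f (Set.Icc 0 t)) (ht : 0 ≤ t)
    {a ε : ℝ} (h0 : f 0 < a) (hε : 0 < ε) :
    ∀ᶠ m : ℕ in atTop, ∀ k ≤ 2 ^ m, (∀ j < k, f (dyadic t m j) < a) →
      f (dyadic t m k) < a + ε := by
  obtain ⟨δ, hδ, hunif⟩ := Metric.uniformContinuousOn_iff.mp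
    (isCompact_Icc.uniformContinuousOn_of_continuous hf) ε hε
  filter_upwards [eventually_div_two_pow_lt t hδ] with m hm k hk hbefore
  rcases k with _ | k
  · simpa using h0.trans (lt_add_of_pos_right a hε)
  · have hclose :=
      hunif _ (dyadic_mem_Icc ht hk) _ (dyadic_mem_Icc ht (Nat.le_of_succ_le hk))
      (by rw [Real.dist_eq, dyadic_succ_sub, abs_of_nonneg (by positivity)]; exact hm)
    rw [Real.dist_eq, abs_sub_lt_iff] at hclose
    linarith [hbefore k (Nat.lt_succ_self k)]

end ContinuousPath

section BrownianMotion

variable [MeasurableSpace Ω] {P : Measure Ω} {B : ℝ → Ω → ℝ} {t : ℝ}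

/-- Subtracting `B 0`, which vanishes only almost surely, makes the sampled path start at `0`
everywhere. -/
noncomputable def sampledPath (B : ℝ → Ω → ℝ) (p : ℕ → ℝ) (j : ℕ) (ω : Ω) : ℝ :=
  B (p j) ω - B 0 ω

theorem IsStandardBM.hasIndepSymmIncrements_sampledPath (hB : IsStandardBM P B) {p : ℕ → ℝ}
    (hp : Monotone p) (hp0 : p 0 = 0) (n : ℕ) :
    HasIndepSymmIncrements (sampledPath B p) n P where
  measurable _ := (hB.meas _).sub (hB.meas _)
  zero ω := by simp [sampledPath, hp0]
  iIndepFun_incr := by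
    convert hB.indep n (fun j => p j) (fun i j hij => hp hij) hp0.ge using 3 with i ω
    simp [sampledPath]
  map_neg_sub k hk := by
    simp only [sampledPath, sub_sub_sub_cancel_right]
    rw [hB.incr _ _ (hp0.symm.trans_le (hp k.zero_le)) (hp hk), gaussianReal_map_neg, neg_zero]

theorem IsStandardBM.measure_le_sampledPath_dyadic (hB : IsStandardBM P B) (t c : ℝ)
    (m : ℕ) :
    P {ω | c ≤ sampledPath B (dyadic t m) (2 ^ m) ω} = P {ω | c ≤ B t ω} :=
  measure_congr <| by
    filter_upwards [hB.init] with ω h0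
    change (c ≤ B (dyadic t m (2 ^ m)) ω - B 0 ω) = (c ≤ B t ω)
    rw [dyadic_two_pow, h0, sub_zero]

theorem IsStandardBM.measure_le_runMax_and_le_le (hB : IsStandardBM P B) (ht : 0 < t)
    {a a' b : ℝ} (ha' : a' < a) (hb : b ≤ a') :
    P {ω | a ≤ runMax B t ω ∧ B t ω ≤ b} ≤ P {ω | 2 * a' - b ≤ B t ω} := by
  set Z := fun m => sampledPath B (dyadic t m)
  set D : ℕ → Set Ω := fun m => {ω | (∃ j ≤ 2 ^ m, a' ≤ Z m j ω) ∧ Z m (2 ^ m) ω ≤ b}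
  have hD : Monotone D := monotone_nat_of_le_succ fun m ω ⟨⟨j, hj, hja⟩, hbω⟩ =>
    ⟨⟨2 * j, by rw [pow_succ]; omega, by simpa [Z, sampledPath, dyadic_two_mul] using hja⟩,
      by simpa [Z, sampledPath] using hbω⟩
  have hcover : {ω | a ≤ runMax B t ω ∧ B t ω ≤ b} ≤ᵐ[P] ⋃ m, D m := by
    filter_upwards [hB.init, hB.cont] with ω h0 hc ⟨ha, hbω⟩
    obtain ⟨m, j, hj, hlt⟩ := exists_dyadic_lt_of_lt_sSup hc ht (ha'.trans_le ha)
    exact Set.mem_iUnion.mpr ⟨m, ⟨j, hj, by simpa [Z, sampledPath, h0] using hlt.le⟩,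
      by simpa [Z, sampledPath, h0] using hbω⟩
  calc P {ω | a ≤ runMax B t ω ∧ B t ω ≤ b} ≤ P (⋃ m, D m) := measure_mono_ae hcover
    _ = ⨆ m, P (D m) := hD.measure_iUnion
    _ ≤ P {ω | 2 * a' - b ≤ B t ω} := iSup_le fun m =>
      ((hB.hasIndepSymmIncrements_sampledPath (monotone_dyadic ht.le m) (dyadic_zero t m)
        (2 ^ m)).measure_exists_le_and_le_le hb).trans_eq
        (hB.measure_le_sampledPath_dyadic t _ m)

theorem IsStandardBM.measure_le_le_runMax_and_le (hB : IsStandardBM P B) (ht : 0 < t)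
    {a b : ℝ} (ha : 0 < a) (hb : b ≤ a) :
    P {ω | 2 * a - b ≤ B t ω} ≤ P {ω | a ≤ runMax B t ω ∧ B t ω ≤ b} := by
  have := hB.isProb
  set Z := fun m => sampledPath B (dyadic t m)
  have hZ m := hB.hasIndepSymmIncrements_sampledPath (monotone_dyadic ht.le m) (dyadic_zero t m)
    (2 ^ m)
  set E : ℕ → Set Ω := fun m => ⋃ k ∈ range (2 ^ m + 1),
    firstPassageAt (Z m) a k ∩ {ω | Z m (2 ^ m) ω ≤ 2 * Z m k ω - (2 * a - b)}
  have hE : ∀ m, MeasurableSet (E m) := fun m =>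
    Finset.measurableSet_biUnion _ fun k _ =>
      (measurableSet_firstPassageAt (hZ m).measurable k).inter <| measurableSet_le
        ((hZ m).measurable _) ((((hZ m).measurable k).const_mul 2).sub_const _)
  refine (le_measure_limsup_atTop hE fun m => ?_).trans (measure_mono_ae ?_)
  · rw [← hB.measure_le_sampledPath_dyadic t _ m, (hZ m).measure_le_eq_measure_reflect (a := a)
      (by linarith)]
  filter_upwards [hB.init, hB.cont] with ω h0 hc hω
  have hfreq : ∃ᶠ m in atTop, ∃ k,
      (a ≤ B (dyadic t m k) ω ∧ ∀ j < k, B (dyadic t m j) ω < a) ∧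
        k ≤ 2 ^ m ∧ B t ω ≤ 2 * B (dyadic t m k) ω - (2 * a - b) :=
    (mem_limsup_iff_frequently_mem.mp hω).mono fun m hm => by
      simpa [E, Z, sampledPath, h0, firstPassageAt, Nat.lt_succ_iff] using hm
  refine ⟨?_, le_of_forall_pos_lt_add fun ε hε => ?_⟩
  · obtain ⟨m, k, ⟨hak, -⟩, hk, -⟩ := hfreq.exists
    exact hak.trans <|
      le_csSup (isCompact_Icc.image hc).bddAbove ⟨_, dyadic_mem_Icc ht.le hk, rfl⟩
  · obtain ⟨m, ⟨k, ⟨-, hbefore⟩, hk, hrefl⟩, hover⟩ := (hfreq.and_eventually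
      (eventually_firstPassage_overshoot_lt hc.continuousOn ht.le (by simpa [h0] using ha)
        (half_pos hε))).exists
    linarith [hover k hk hbefore]

end BrownianMotion

end Reflection

theorem stmt_9 {Ω : Type*} [MeasurableSpace Ω] (P : Measure Ω) (B : ℝ → Ω → ℝ)
    (hB : IsStandardBM P B) (t a b : ℝ) (ht : 0 < t) (hab : max b 0 < a) :
    P {ω | a ≤ runMax B t ω ∧ B t ω ≤ b} = P {ω | 2 * a - b ≤ B t ω} := by
  have := hB.isProb
  have ha : 0 < a := (le_max_right b 0).trans_lt hab
  have hba : b < a := (le_max_left b 0).trans_lt hab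
  refine le_antisymm (le_measure_setOf_le_of_forall_pos (hB.meas t) fun ε hε => ?_)
    (hB.measure_le_le_runMax_and_le ht ha hba.le)
  calc P {ω | a ≤ runMax B t ω ∧ B t ω ≤ b}
      ≤ P {ω | 2 * max b (a - ε / 2) - b ≤ B t ω} :=
        hB.measure_le_runMax_and_le_le ht (max_lt hba (by linarith)) (le_max_left _ _)
    _ ≤ P {ω | 2 * a - b - ε ≤ B t ω} := measure_mono fun ω (hω : _ ≤ B t ω) =>
        show 2 * a - b - ε ≤ B t ω by linarith [le_max_right b (a - ε / 2)]
end

section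
/- Fix μ, σ, r > 0 with roots γ₁ > 0 > γ₂ of (σ²/2)γ² + μγ - r = 0, and let g(x) = (γ₁·e^{γ₂x} - γ₂·e^{γ₁x})/(γ₁ - γ₂). Let π : ℝ → ℝ be C², strictly concave, with maximum at q̄ > 0, and let L, c > 0 with π(q̄) - L + c > 0. If a C¹ function z : (m₁, q̄) → (-∞, 0) satisfies 1 + z'(m) = (g(-z(m))/g'(-z(m)))·(π'(m)/(π(m) - L + c)), z(m) → 0 as m → q̄, and ℓ := lim_{m→q̄} z'(m) exists, then ℓ satisfies ℓ + ℓ² = π''(q̄)/(γ₁γ₂·(π(q̄) - L + c)), hence ℓ = √(π''(q̄)/(γ₁γ₂(π(q̄) - L + c)) + 1/4) - 1/2 ≥ 0. -/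
/-!
Near `q̄` both `z` and `π'` vanish, so by L'Hôpital `z m / (m - q̄) → ℓ` and
`π' m / (m - q̄) → π''(q̄)`, while `g y * y / g' y → 1 / g''(0) = -1 / (γ₁ γ₂)` as `y → 0`.
Multiplying the ODE by `z m / (m - q̄)` and letting `m → q̄` gives
`(1 + ℓ) ℓ = π''(q̄) / (γ₁ γ₂ (π(q̄) - L + c))`. Since `z < 0` to the left of `q̄`, `ℓ ≥ 0`,
which selects the nonnegative root of this quadratic.
-/

open Filter Topology

theorem HasDerivAt.tendsto_div_sub_of_eq_zero {f : ℝ → ℝ} {f' a : ℝ} (hf : HasDerivAt f f' a)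
    (ha : f a = 0) : Tendsto (fun x => f x / (x - a)) (𝓝[≠] a) (𝓝 f') := by
  refine hf.tendsto_slope.congr fun x => ?_
  rw [slope_def_field, ha, sub_zero]

theorem tendsto_div_sub_of_tendsto_deriv_nhdsLT {f : ℝ → ℝ} {a ℓ : ℝ}
    (hf : ∀ᶠ x in 𝓝[<] a, DifferentiableAt ℝ f x) (hf0 : Tendsto f (𝓝[<] a) (𝓝 0))
    (hℓ : Tendsto (deriv f) (𝓝[<] a) (𝓝 ℓ)) :
    Tendsto (fun x => f x / (x - a)) (𝓝[<] a) (𝓝 ℓ) := by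
  refine deriv.lhopital_zero_nhdsLT hf (by simp) hf0 ?_ (by simpa using hℓ)
  simpa using ((continuous_sub_right a).tendsto' a 0 (sub_self a)).mono_left nhdsWithin_le_nhds

theorem eq_sqrt_add_quarter_sub_half {ℓ K : ℝ} (hℓ : 0 ≤ ℓ) (h : ℓ + ℓ ^ 2 = K) :
    ℓ = √(K + 1 / 4) - 1 / 2 := by
  rw [← h, show ℓ + ℓ ^ 2 + 1 / 4 = (ℓ + 1 / 2) ^ 2 by ring, Real.sqrt_sq (by linarith)]
  ring

section gExp

open Real

noncomputable def gExp (a b x : ℝ) : ℝ := (a * exp (b * x) - b * exp (a * x)) / (a - b)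

variable (a b : ℝ)

theorem hasDerivAt_exp_const_mul (x : ℝ) :
    HasDerivAt (fun x => exp (a * x)) (exp (a * x) * a) x := by
  simpa using ((hasDerivAt_id' x).const_mul a).exp

theorem hasDerivAt_gExp (x : ℝ) :
    HasDerivAt (gExp a b) (a * b * (exp (b * x) - exp (a * x)) / (a - b)) x :=
  ((((hasDerivAt_exp_const_mul b x).const_mul a).sub
    ((hasDerivAt_exp_const_mul a x).const_mul b)).div_const (a - b)).congr_deriv (by ring)

theorem deriv_gExp :
    deriv (gExp a b) = fun x => a * b * (exp (b * x) - exp (a * x)) / (a - b) :=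
  funext fun x => (hasDerivAt_gExp a b x).deriv

theorem continuous_gExp : Continuous (gExp a b) :=
  continuous_iff_continuousAt.2 fun x => (hasDerivAt_gExp a b x).continuousAt

variable {a b}

theorem gExp_zero (hab : a ≠ b) : gExp a b 0 = 1 := by
  simp [gExp, div_self (sub_ne_zero.2 hab)]

theorem hasDerivAt_deriv_gExp_zero (hab : a ≠ b) :
    HasDerivAt (deriv (gExp a b)) (-(a * b)) 0 := by
  rw [deriv_gExp]
  refine ((((hasDerivAt_exp_const_mul b 0).sub (hasDerivAt_exp_const_mul a 0)).const_mul
    (a * b)).div_const (a - b)).congr_deriv ?_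
  simp only [mul_zero, exp_zero, one_mul]
  field_simp [sub_ne_zero.2 hab]
  ring

theorem tendsto_gExp_mul_div_deriv_gExp (hab : a ≠ b) (ha : a ≠ 0) (hb : b ≠ 0) :
    Tendsto (fun y => gExp a b y * y / deriv (gExp a b) y) (𝓝[≠] 0) (𝓝 (-(a * b))⁻¹) := by
  have hderiv :=
    (hasDerivAt_deriv_gExp_zero hab).tendsto_div_sub_of_eq_zero (by simp [deriv_gExp])
  have hg := ((continuous_gExp a b).tendsto' 0 1 (gExp_zero hab)).mono_left
    (nhdsWithin_le_nhds (s := {0}ᶜ))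
  simp only [sub_zero] at hderiv
  convert hg.div hderiv (by simp [ha, hb]) using 2 with y
  · exact (div_div_eq_mul_div _ _ _).symm
  · simp

end gExp

theorem add_sq_eq_of_tendsto_slope {g π z : ℝ → ℝ} {q L c ℓ κ A : ℝ}
    (hφ : Tendsto (fun y => g y * y / deriv g y) (𝓝[≠] 0) (𝓝 κ))
    (hπ : ContinuousAt π q) (hπ' : deriv π q = 0) (hπ'' : HasDerivAt (deriv π) A q)
    (hK : π q - L + c ≠ 0) (hz : ∀ᶠ m in 𝓝[<] q, z m ≠ 0)
    (hode : ∀ᶠ m in 𝓝[<] q,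
      HasDerivAt z (g (-z m) / deriv g (-z m) * (deriv π m / (π m - L + c)) - 1) m)
    (hz0 : Tendsto z (𝓝[<] q) (𝓝 0)) (hℓ : Tendsto (deriv z) (𝓝[<] q) (𝓝 ℓ))
    (hslope : Tendsto (fun m => z m / (m - q)) (𝓝[<] q) (𝓝 ℓ)) :
    ℓ + ℓ ^ 2 = -(κ * A / (π q - L + c)) := by
  have hmz : Tendsto (fun m => -z m) (𝓝[<] q) (𝓝[≠] 0) :=
    tendsto_nhdsWithin_iff.2 ⟨by simpa using hz0.neg, hz.mono fun m hm => neg_ne_zero.2 hm⟩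
  have hslopeπ : Tendsto (fun m => deriv π m / (m - q)) (𝓝[<] q) (𝓝 A) :=
    (hπ''.tendsto_div_sub_of_eq_zero hπ').mono_left (nhdsLT_le_nhdsNE q)
  have hK' : Tendsto (fun m => π m - L + c) (𝓝[<] q) (𝓝 (π q - L + c)) :=
    ((hπ.tendsto.sub_const L).add_const c).mono_left nhdsWithin_le_nhds
  -- Multiplying the equation by `z m / (m - q)` isolates the two slopes that converge.
  have hrewrite : ∀ᶠ m in 𝓝[<] q, (1 + deriv z m) * (z m / (m - q)) =
      -(g (-z m) * -z m / deriv g (-z m) * (deriv π m / (m - q)) / (π m - L + c)) := by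
    filter_upwards [hode] with m hm
    rw [hm.deriv]
    ring
  have hleft := ((tendsto_const_nhds (x := (1 : ℝ))).add hℓ).mul hslope
  have hright := (((hφ.comp hmz).mul hslopeπ).div hK' hK).neg
  have := tendsto_nhds_unique (hleft.congr' hrewrite) hright
  linear_combination this

theorem stmt_15_general (γ₁ γ₂ : ℝ) (h1 : 0 < γ₁) (h2 : γ₂ < 0)
    (g : ℝ → ℝ)
    (hg : ∀ x, g x = (γ₁ * Real.exp (γ₂ * x) - γ₂ * Real.exp (γ₁ * x)) / (γ₁ - γ₂))
    (π : ℝ → ℝ) (hπ : ContDiff ℝ 2 π)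
    (qbar : ℝ)
    (hπ' : deriv π qbar = 0)
    (L c : ℝ) (hpos : 0 < π qbar - L + c)
    (m₁ : ℝ) (hm₁ : m₁ < qbar) (z : ℝ → ℝ)
    (hzneg : ∀ m ∈ Set.Ioo m₁ qbar, z m < 0)
    (hode : ∀ m ∈ Set.Ioo m₁ qbar,
      HasDerivAt z
        (g (-z m) / deriv g (-z m) * (deriv π m / (π m - L + c)) - 1) m)
    (hz0 : Filter.Tendsto z (nhdsWithin qbar (Set.Iio qbar)) (nhds 0))
    (ℓ : ℝ)
    (hℓ : Filter.Tendsto (deriv z) (nhdsWithin qbar (Set.Iio qbar)) (nhds ℓ)) :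
    ℓ + ℓ ^ 2 = deriv (deriv π) qbar / (γ₁ * γ₂ * (π qbar - L + c)) ∧
    ℓ = Real.sqrt (deriv (deriv π) qbar / (γ₁ * γ₂ * (π qbar - L + c)) + 1 / 4) - 1 / 2 ∧
    0 ≤ ℓ := by
  obtain rfl : g = gExp γ₁ γ₂ := funext hg
  have hleft : Set.Ioo m₁ qbar ∈ 𝓝[<] qbar := Ioo_mem_nhdsLT hm₁
  have hslope : Tendsto (fun m => z m / (m - qbar)) (𝓝[<] qbar) (𝓝 ℓ) :=
    tendsto_div_sub_of_tendsto_deriv_nhdsLT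
      (mem_of_superset hleft fun m hm => (hode m hm).differentiableAt) hz0 hℓ
  have hℓ0 : 0 ≤ ℓ := ge_of_tendsto hslope <| mem_of_superset hleft fun m hm =>
    (div_pos_of_neg_of_neg (hzneg m hm) (sub_neg.2 hm.2)).le
  have hfix := add_sq_eq_of_tendsto_slope
    (tendsto_gExp_mul_div_deriv_gExp (by linarith) h1.ne' h2.ne) hπ.continuous.continuousAt hπ'
    (hπ.differentiable_deriv_two qbar).hasDerivAt hpos.ne'
    (mem_of_superset hleft fun m hm => (hzneg m hm).ne) (mem_of_superset hleft hode) hz0 hℓ hslope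
  have hK : ℓ + ℓ ^ 2 = deriv (deriv π) qbar / (γ₁ * γ₂ * (π qbar - L + c)) := by
    rw [hfix]
    field_simp
  exact ⟨hK, eq_sqrt_add_quarter_sub_half hℓ0 hK, hℓ0⟩

theorem stmt_15 (μ σ r : ℝ) (hμ : 0 < μ) (hσ : 0 < σ) (hr : 0 < r)
    (γ₁ γ₂ : ℝ) (h1 : 0 < γ₁) (h2 : γ₂ < 0)
    (hroot1 : σ ^ 2 / 2 * γ₁ ^ 2 + μ * γ₁ - r = 0)
    (hroot2 : σ ^ 2 / 2 * γ₂ ^ 2 + μ * γ₂ - r = 0)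
    (g : ℝ → ℝ)
    (hg : ∀ x, g x = (γ₁ * Real.exp (γ₂ * x) - γ₂ * Real.exp (γ₁ * x)) / (γ₁ - γ₂))
    (π : ℝ → ℝ) (hπ : ContDiff ℝ 2 π) (hconc : StrictConcaveOn ℝ Set.univ π)
    (qbar : ℝ) (hqbar : 0 < qbar) (hmax : IsMaxOn π Set.univ qbar)
    (hπ' : deriv π qbar = 0) (hπ'' : deriv (deriv π) qbar < 0)
    (L c : ℝ) (hL : 0 < L) (hc : 0 < c) (hpos : 0 < π qbar - L + c)
    (m₁ : ℝ) (hm₁ : m₁ < qbar) (z : ℝ → ℝ)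
    (hzneg : ∀ m ∈ Set.Ioo m₁ qbar, z m < 0)
    (hode : ∀ m ∈ Set.Ioo m₁ qbar,
      HasDerivAt z
        (g (-z m) / deriv g (-z m) * (deriv π m / (π m - L + c)) - 1) m)
    (hz0 : Filter.Tendsto z (nhdsWithin qbar (Set.Iio qbar)) (nhds 0))
    (ℓ : ℝ)
    (hℓ : Filter.Tendsto (deriv z) (nhdsWithin qbar (Set.Iio qbar)) (nhds ℓ)) :
    ℓ + ℓ ^ 2 = deriv (deriv π) qbar / (γ₁ * γ₂ * (π qbar - L + c)) ∧
    ℓ = Real.sqrt (deriv (deriv π) qbar / (γ₁ * γ₂ * (π qbar - L + c)) + 1 / 4) - 1 / 2 ∧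
    0 ≤ ℓ :=
  stmt_15_general γ₁ γ₂ h1 h2 g hg π hπ qbar hπ' L c hpos m₁ hm₁ z hzneg hode hz0 ℓ hℓ
end

section
/- Suppose z : I → ℝ is C¹ with z(m) < 0 and satisfies 1 + z'(m) = (g(-z(m))/g'(-z(m)))·(π'(m)/(π(m) - L + c)) on I, where g, π are as below. Setting y(m) = e^{-(γ₁-γ₂)z(m)}, the function y satisfies the Abel equation of the second kind: y'(m)·(y(m) - 1) = f₁(m)·y(m) + f₂(m)·y(m)², where f₁(m) = ((γ₁-γ₂)/γ₂)·(π'(m)/(π(m)-L+c) - γ₂) and f₂(m) = ((γ₁-γ₂)/γ₁)·(γ₁ - π'(m)/(π(m)-L+c)). -/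
/-! With `y = e^{(γ₁-γ₂)x}`, the ratio `g/g'` becomes the Möbius expression
`(γ₁ - γ₂ y) / (γ₁ γ₂ (1 - y))`, and `y' = -(γ₁-γ₂) y z'`. Substituting the ODE for `z'` and
multiplying by `y - 1` clears the pole at `y = 1`, which leaves a quadratic in `y`. -/

section

open Real

lemma hasDerivAt_exp_combination (γ₁ γ₂ x : ℝ) :
    HasDerivAt (fun x => (γ₁ * exp (γ₂ * x) - γ₂ * exp (γ₁ * x)) / (γ₁ - γ₂))
      (γ₁ * γ₂ * (exp (γ₂ * x) - exp (γ₁ * x)) / (γ₁ - γ₂)) x := by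
  have hlin (γ : ℝ) : HasDerivAt (fun x => γ * x) γ x := by
    simpa using (hasDerivAt_id x).const_mul γ
  exact ((((hlin γ₂).exp.const_mul γ₁).sub ((hlin γ₁).exp.const_mul γ₂)).div_const
    (γ₁ - γ₂)).congr_deriv (by ring)

lemma exp_combination_div_deriv {γ₁ γ₂ : ℝ} (hγ : γ₁ ≠ γ₂) (x : ℝ) :
    (γ₁ * exp (γ₂ * x) - γ₂ * exp (γ₁ * x)) / (γ₁ - γ₂) /
        (γ₁ * γ₂ * (exp (γ₂ * x) - exp (γ₁ * x)) / (γ₁ - γ₂)) =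
      (γ₁ - γ₂ * exp ((γ₁ - γ₂) * x)) / (γ₁ * γ₂ * (1 - exp ((γ₁ - γ₂) * x))) := by
  have hsplit : exp (γ₁ * x) = exp (γ₂ * x) * exp ((γ₁ - γ₂) * x) := by
    rw [← exp_add]; ring_nf
  rw [div_div_div_cancel_right₀ (sub_ne_zero.mpr hγ), hsplit]
  convert mul_div_mul_left _ _ (exp_pos (γ₂ * x)).ne' using 2 <;> ring

lemma abel_identity {γ₁ γ₂ y : ℝ} (h₁ : γ₁ ≠ 0) (h₂ : γ₂ ≠ 0) (hy : y ≠ 1) (P : ℝ) :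
    y * (-(γ₁ - γ₂) * ((γ₁ - γ₂ * y) / (γ₁ * γ₂ * (1 - y)) * P - 1)) * (y - 1) =
      (γ₁ - γ₂) / γ₂ * (P - γ₂) * y + (γ₁ - γ₂) / γ₁ * (γ₁ - P) * y ^ 2 := by
  have : 1 - y ≠ 0 := sub_ne_zero.mpr hy.symm
  field_simp
  ring

end

theorem stmt_16_general (γ₁ γ₂ : ℝ) (h1 : 0 < γ₁) (h2 : γ₂ < 0) (g : ℝ → ℝ)
    (hg : ∀ x, g x = (γ₁ * Real.exp (γ₂ * x) - γ₂ * Real.exp (γ₁ * x)) / (γ₁ - γ₂))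
    (π : ℝ → ℝ) (L c : ℝ) (I : Set ℝ)
    (z : ℝ → ℝ) (hzneg : ∀ m ∈ I, z m < 0)
    (hode : ∀ m ∈ I,
      HasDerivAt z
        (g (-z m) / deriv g (-z m) * (deriv π m / (π m - L + c)) - 1) m) :
    ∀ m ∈ I,
      deriv (fun m => Real.exp (-(γ₁ - γ₂) * z m)) m *
          (Real.exp (-(γ₁ - γ₂) * z m) - 1) =
        ((γ₁ - γ₂) / γ₂ * (deriv π m / (π m - L + c) - γ₂)) *
            Real.exp (-(γ₁ - γ₂) * z m) +
          ((γ₁ - γ₂) / γ₁ * (γ₁ - deriv π m / (π m - L + c))) *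
            Real.exp (-(γ₁ - γ₂) * z m) ^ 2 := by
  intro m hm
  have hg_eq : g = fun x => (γ₁ * Real.exp (γ₂ * x) - γ₂ * Real.exp (γ₁ * x)) / (γ₁ - γ₂) :=
    funext hg
  have hy : Real.exp (-(γ₁ - γ₂) * z m) ≠ 1 :=
    (Real.one_lt_exp_iff.mpr (by nlinarith [hzneg m hm])).ne'
  have hratio := exp_combination_div_deriv (γ₁ := γ₁) (γ₂ := γ₂) (by linarith) (-z m)
  rw [((hode m hm).const_mul _).exp.deriv, hg_eq, (hasDerivAt_exp_combination γ₁ γ₂ _).deriv,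
    hratio, mul_neg, ← neg_mul]
  exact abel_identity h1.ne' h2.ne hy _

theorem stmt_16 (γ₁ γ₂ : ℝ) (h1 : 0 < γ₁) (h2 : γ₂ < 0) (g : ℝ → ℝ)
    (hg : ∀ x, g x = (γ₁ * Real.exp (γ₂ * x) - γ₂ * Real.exp (γ₁ * x)) / (γ₁ - γ₂))
    (π : ℝ → ℝ) (L c : ℝ) (I : Set ℝ) (hI : IsOpen I)
    (hpos : ∀ m ∈ I, 0 < π m - L + c)
    (z : ℝ → ℝ) (hzneg : ∀ m ∈ I, z m < 0)
    (hode : ∀ m ∈ I,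
      HasDerivAt z
        (g (-z m) / deriv g (-z m) * (deriv π m / (π m - L + c)) - 1) m) :
    ∀ m ∈ I,
      deriv (fun m => Real.exp (-(γ₁ - γ₂) * z m)) m *
          (Real.exp (-(γ₁ - γ₂) * z m) - 1) =
        ((γ₁ - γ₂) / γ₂ * (deriv π m / (π m - L + c) - γ₂)) *
            Real.exp (-(γ₁ - γ₂) * z m) +
          ((γ₁ - γ₂) / γ₁ * (γ₁ - deriv π m / (π m - L + c))) *
            Real.exp (-(γ₁ - γ₂) * z m) ^ 2 :=
  stmt_16_general γ₁ γ₂ h1 h2 g hg π L c I z hzneg hode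
end
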